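/- arXiv:1110.1058 — 2 statements merged into one kernel-verified Lean document; each statement's English description precedes it below -/
import Mathlib

section
/- Let T > 0 and a > 0. Let s ∈ C¹([0,T]) with s > 0, set D_T = {(x,t) : 0 < x < s(t), 0 < t ≤ T}, and let v ∈ C²(D_T) ∩ C¹(D̄_T) satisfy ∂_t v = ∂_{xx} v + a ∂_x v in D_T, the flux boundary condition (∂_x v + a v)(0,t) = −a for 0 < t ≤ T, and v(s(t),t) = 0 for 0 < t ≤ T. If v(·,0) ≥ 0 on [0, s(0)], then v ≥ 0 everywhere on D̄_T. -/
/-!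
Multiplying by `e^{a x}` turns the equation into `u_t = u_xx - a u_x` and the flux condition into
`u_x(0, t) = -a < 0`. If `u + ε t` took a negative value before time `T`, look at the first time it
reaches a suitable negative level `c`: there it is minimal over the past. Such a point lies neither
on the initial line nor on the free boundary, where `u + ε t ≥ 0`; nor on `x = 0`, where `u_x < 0`;
nor inside, where `u_x = 0 ≤ u_xx` gives `u_t ≥ 0` while minimality over the past gives
`u_t ≤ -ε`. Letting `ε → 0` gives `v ≥ 0` before time `T`, and continuity gives it on the closure.
-/

open Set Filter Topology Real

theorem IsLocalMin.deriv_deriv_nonneg {f : ℝ → ℝ} {x : ℝ} (h : IsLocalMin f x)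
    (hc : ContinuousAt f x) : 0 ≤ deriv (deriv f) x := by
  by_contra! hneg
  have hconst : f =ᶠ[𝓝 x] fun _ => f x :=
    (h.and (isLocalMax_of_deriv_deriv_neg hneg h.deriv_eq_zero hc)).mono
      fun y hy => le_antisymm hy.2 hy.1
  have hderiv : deriv f =ᶠ[𝓝 x] fun _ => 0 := by
    simpa using hconst.deriv
  simp [hderiv.deriv_eq] at hneg

theorem HasDerivAt.nonneg_of_isLocalMinOn_Ici {f : ℝ → ℝ} {f' x : ℝ} (hf : HasDerivAt f f' x)
    (h : IsLocalMinOn f (Ici x) x) : 0 ≤ f' := by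
  simpa using h.hasFDerivWithinAt_nonneg hf.hasDerivWithinAt.hasFDerivWithinAt
    (mem_posTangentConeAt_of_segment_subset
      ((convex_Ici x).segment_subset self_mem_Ici (by simp : x + 1 ∈ Ici x)))

theorem HasDerivAt.nonpos_of_isLocalMinOn_Iic {f : ℝ → ℝ} {f' x : ℝ} (hf : HasDerivAt f f' x)
    (h : IsLocalMinOn f (Iic x) x) : f' ≤ 0 := by
  simpa using h.hasFDerivWithinAt_nonneg hf.hasDerivWithinAt.hasFDerivWithinAt
    (mem_posTangentConeAt_of_segment_subset
      ((convex_Iic x).segment_subset self_mem_Iic (by simp : x + -1 ∈ Iic x)))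

theorem HasDerivAt.exp_mul_left {f : ℝ → ℝ} {f' a x : ℝ} (hf : HasDerivAt f f' x) :
    HasDerivAt (fun ξ => Real.exp (a * ξ) * f ξ) (Real.exp (a * x) * (a * f x + f')) x :=
  (((hasDerivAt_id' x).const_mul a).exp.fun_mul hf).congr_deriv (by ring)

theorem add_mul_nonneg_of_isLocalMinOn_Ici_exp_mul {f : ℝ → ℝ} {f' a x : ℝ}
    (hf : HasDerivAt f f' x) (h : IsLocalMinOn (fun ξ => exp (a * ξ) * f ξ) (Ici x) x) :
    0 ≤ f' + a * f x := by
  have := hf.exp_mul_left.nonneg_of_isLocalMinOn_Ici h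
  nlinarith [exp_pos (a * x)]

theorem deriv_deriv_add_mul_deriv_nonneg_of_isLocalMin_exp_mul {f : ℝ → ℝ} {a x : ℝ}
    (hf : ∀ᶠ y in 𝓝 x, DifferentiableAt ℝ f y) (hf' : DifferentiableAt ℝ (deriv f) x)
    (h : IsLocalMin (fun ξ => exp (a * ξ) * f ξ) x) :
    0 ≤ deriv (deriv f) x + a * deriv f x := by
  have hderiv : deriv (fun ξ => exp (a * ξ) * f ξ) =ᶠ[𝓝 x]
      fun ξ => exp (a * ξ) * (a * f ξ + deriv f ξ) :=
    hf.mono fun y hy => hy.hasDerivAt.exp_mul_left.deriv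
  have hcrit : a * f x + deriv f x = 0 := by
    have := hderiv.self_of_nhds.symm.trans h.deriv_eq_zero
    simpa [(exp_pos _).ne'] using this
  have hsum : HasDerivAt (fun ξ => a * f ξ + deriv f ξ) (a * deriv f x + deriv (deriv f) x) x :=
    (hf.self_of_nhds.hasDerivAt.const_mul a).add hf'.hasDerivAt
  have hsecond := (hsum.exp_mul_left (a := a)).deriv
  have hsecond_nonneg := h.deriv_deriv_nonneg
    ((continuous_exp.comp (continuous_const_mul a)).continuousAt.mul hf.self_of_nhds.continuousAt)
  rw [hderiv.deriv_eq, hsecond, hcrit] at hsecond_nonneg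
  nlinarith [exp_pos (a * x)]

theorem IsMinOn.isLocalMinOn_of_mem_nhds {X : Type*} [TopologicalSpace X] {f : X → ℝ}
    {K S : Set X} {a : X} (h : IsMinOn f (K ∩ S) a) (hK : K ∈ 𝓝 a) : IsLocalMinOn f S a := by
  have := h.localize
  rwa [IsLocalMinOn, nhdsWithin_inter_of_mem (mem_nhdsWithin_of_mem_nhds hK)] at this

theorem IsLocalMinOn.isLocalMin_fst {f : ℝ × ℝ → ℝ} {x t : ℝ}
    (h : IsLocalMinOn f {z | z.2 ≤ t} (x, t)) : IsLocalMin (fun ξ => f (ξ, t)) x :=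
  isLocalMinOn_univ_iff.1 <|
    h.comp_continuousOn (g := fun ξ => (ξ, t)) (fun _ _ => (le_rfl : t ≤ t))
      (Continuous.prodMk_left t).continuousOn (mem_univ x)

theorem IsLocalMinOn.isLocalMinOn_snd {f : ℝ × ℝ → ℝ} {x t : ℝ}
    (h : IsLocalMinOn f {z | z.2 ≤ t} (x, t)) : IsLocalMinOn (fun τ => f (x, τ)) (Iic t) t :=
  h.comp_continuousOn (g := fun τ => (x, τ)) (fun _ hτ => hτ)
    (Continuous.prodMk_right x).continuousOn self_mem_Iic

theorem IsCompact.exists_first_hit_isMinOn {X : Type*} [TopologicalSpace X] [T2Space X]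
    {K : Set X} {W τ : X → ℝ} {q : X} {c : ℝ} (hK : IsCompact K) (hW : ContinuousOn W K)
    (hτ : Continuous τ) (hq : q ∈ K) (hqc : W q ≤ c) :
    ∃ p ∈ K, τ p ≤ τ q ∧ W p ≤ c ∧ IsMinOn W (K ∩ {z | τ z ≤ τ p}) p ∧
      ∀ z ∈ K, τ z < τ p → c < W z := by
  have hS : IsCompact (K ∩ W ⁻¹' Iic c) :=
    hK.of_isClosed_subset (hW.preimage_isClosed_of_isClosed hK.isClosed isClosed_Iic)
      inter_subset_left
  obtain ⟨p₀, ⟨hp₀K, hp₀c⟩, hp₀min⟩ := hS.exists_isMinOn ⟨q, hq, hqc⟩ hτ.continuousOn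
  have hbefore : ∀ z ∈ K, τ z < τ p₀ → c < W z := fun z hz hzτ =>
    not_le.1 fun hzc => (hp₀min ⟨hz, hzc⟩).not_gt hzτ
  have hpast : IsCompact (K ∩ {z | τ z ≤ τ p₀}) :=
    hK.inter_right (isClosed_le hτ continuous_const)
  obtain ⟨p, ⟨hpK, hpτ⟩, hpmin⟩ :=
    hpast.exists_isMinOn ⟨p₀, hp₀K, (le_rfl : τ p₀ ≤ τ p₀)⟩ (hW.mono inter_subset_left)
  have hpc : W p ≤ c := (hpmin ⟨hp₀K, (le_rfl : τ p₀ ≤ τ p₀)⟩).trans hp₀c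
  have hpτ' : τ p = τ p₀ := le_antisymm hpτ (not_lt.1 fun h => (hbefore p hpK h).not_ge hpc)
  refine ⟨p, hpK, hpτ'.trans_le (hp₀min ⟨hq, hqc⟩), hpc, ?_, ?_⟩ <;> rw [hpτ']
  · exact hpmin
  · exact hbefore

def stefanDomain (s : ℝ → ℝ) (T : ℝ) : Set (ℝ × ℝ) :=
  {p | 0 < p.1 ∧ p.1 < s p.2 ∧ 0 < p.2 ∧ p.2 ≤ T}

section Domain

variable {s : ℝ → ℝ} {T : ℝ}

theorem closure_stefanDomain_subset (hs : ContinuousOn s (Icc 0 T)) :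
    closure (stefanDomain s T) ⊆ {p | 0 ≤ p.1 ∧ p.1 ≤ s p.2 ∧ 0 ≤ p.2 ∧ p.2 ≤ T} := by
  have hclosed : IsClosed ((Ici (0 : ℝ) ×ˢ Icc 0 T) ∩ (fun p : ℝ × ℝ => p.1 - s p.2) ⁻¹' Iic 0) :=
    (continuousOn_fst.sub (hs.comp continuousOn_snd fun p hp => hp.2)).preimage_isClosed_of_isClosed
      (isClosed_Ici.prod isClosed_Icc) isClosed_Iic
  refine (closure_minimal ?_ hclosed).trans ?_
  · rintro p ⟨hx, hxs, ht, htT⟩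
    exact ⟨⟨hx.le, ht.le, htT⟩, by simpa using hxs.le⟩
  · rintro p ⟨⟨hx, ht, htT⟩, hxs⟩
    exact ⟨hx, by simpa using hxs, ht, htT⟩

theorem isCompact_closure_stefanDomain (hs : ContinuousOn s (Icc 0 T)) :
    IsCompact (closure (stefanDomain s T)) := by
  obtain ⟨M, hM⟩ := isCompact_Icc.bddAbove_image hs
  refine ((isCompact_Icc (a := ((0 : ℝ), (0 : ℝ))) (b := (M, T))).isBounded.subset
    ?_).isCompact_closure
  rintro p ⟨hx, hxs, ht, htT⟩
  exact ⟨⟨hx.le, ht.le⟩, hxs.le.trans (hM ⟨p.2, ⟨ht.le, htT⟩, rfl⟩), htT⟩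

theorem mem_closure_stefanDomain_of_fst_eq_zero {t : ℝ} (ht : 0 < t) (htT : t ≤ T)
    (hst : 0 < s t) : ((0 : ℝ), t) ∈ closure (stefanDomain s T) := by
  have hsegment : Ioo 0 (s t) ×ˢ {t} ⊆ stefanDomain s T := by
    rintro ⟨ξ, τ⟩ ⟨hξ, rfl⟩
    exact ⟨hξ.1, hξ.2, ht, htT⟩
  refine closure_mono hsegment ?_
  rw [closure_prod_eq, closure_Ioo hst.ne, closure_singleton]
  exact ⟨⟨le_rfl, hst.le⟩, rfl⟩

theorem isOpen_stefanDomain_inter (hs : ContinuousOn s (Icc 0 T)) :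
    IsOpen (stefanDomain s T ∩ {p | p.2 < T}) := by
  have hopen : IsOpen ((Ioi (0 : ℝ) ×ˢ Ioo 0 T) ∩ (fun p : ℝ × ℝ => s p.2 - p.1) ⁻¹' Ioi 0) :=
    ((hs.mono Ioo_subset_Icc_self).comp continuousOn_snd (fun p hp => hp.2) |>.sub
      continuousOn_fst).isOpen_inter_preimage (isOpen_Ioi.prod isOpen_Ioo) isOpen_Ioi
  convert hopen using 1
  ext p
  simp only [stefanDomain, mem_inter_iff, mem_ofPred_eq, mem_prod, mem_Ioi, mem_Ioo, mem_preimage,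
    sub_pos]
  constructor
  · rintro ⟨⟨hx, hxs, ht, -⟩, htT⟩
    exact ⟨⟨hx, ht, htT⟩, hxs⟩
  · rintro ⟨⟨hx, ht, htT⟩, hxs⟩
    exact ⟨⟨hx, hxs, ht, htT.le⟩, htT⟩

theorem stefanDomain_subset_closure_inter (hs : ContinuousOn s (Icc 0 T)) :
    stefanDomain s T ⊆ closure (stefanDomain s T ∩ {p | p.2 < T}) := by
  rintro ⟨x, t⟩ hp
  obtain ⟨hx, hxs, ht, htT⟩ := hp
  rcases htT.lt_or_eq with htT | rfl
  · exact subset_closure ⟨⟨hx, hxs, ht, htT.le⟩, htT⟩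
  have := right_nhdsWithin_Ioo_neBot ht
  have hsx : ∀ᶠ τ in 𝓝[Ioo 0 t] t, x < s τ :=
    ((hs t ⟨ht.le, le_rfl⟩).mono Ioo_subset_Icc_self).eventually (eventually_gt_nhds hxs)
  refine mem_closure_of_tendsto (f := fun τ => (x, τ)) (b := 𝓝[Ioo 0 t] t)
    (((Continuous.prodMk_right x).tendsto t).mono_left nhdsWithin_le_nhds) ?_
  filter_upwards [hsx, self_mem_nhdsWithin] with τ hτ hτt
  exact ⟨⟨hx, hτ, hτt.1, hτt.2.le⟩, hτt.2⟩

end Domain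

/-- `exp (a x) v` is the paper's `w(e^{ax}, t) / a`; it solves `u_t = u_xx - a u_x`, and the
term `ε t` turns the inequality at a minimum into a strict one. -/
noncomputable def barrier (a ε : ℝ) (v : ℝ → ℝ → ℝ) (p : ℝ × ℝ) : ℝ :=
  exp (a * p.1) * v p.1 p.2 + ε * p.2

theorem continuousOn_barrier {a ε : ℝ} {v : ℝ → ℝ → ℝ} {K : Set (ℝ × ℝ)}
    (hv : ContinuousOn (fun p : ℝ × ℝ => v p.1 p.2) K) : ContinuousOn (barrier a ε v) K :=
  ((continuous_exp.comp (continuous_const.mul continuous_fst)).continuousOn.mul hv).add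
    (continuous_const.mul continuous_snd).continuousOn

theorem not_isLocalMinOn_barrier {a ε x t : ℝ} {v : ℝ → ℝ → ℝ} (hε : 0 < ε)
    (hv : ContDiffAt ℝ 2 (fun p : ℝ × ℝ => v p.1 p.2) (x, t))
    (hpde : deriv (fun τ => v x τ) t
      = deriv (deriv (fun ξ => v ξ t)) x + a * deriv (fun ξ => v ξ t) x) :
    ¬ IsLocalMinOn (barrier a ε v) {z | z.2 ≤ t} (x, t) := by
  intro hmin
  have hspace : ContDiffAt ℝ 2 (fun ξ => v ξ t) x :=
    hv.comp x (contDiff_id.prodMk contDiff_const).contDiffAt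
  have htime : DifferentiableAt ℝ (fun τ => v x τ) t :=
    (hv.comp t (contDiff_const.prodMk contDiff_id).contDiffAt).differentiableAt (by norm_num)
  have hspace_min : IsLocalMin (fun ξ => exp (a * ξ) * v ξ t) x :=
    hmin.isLocalMin_fst.mono fun ξ hξ => by simpa [barrier] using hξ
  have hparabolic : 0 ≤ deriv (deriv (fun ξ => v ξ t)) x + a * deriv (fun ξ => v ξ t) x :=
    deriv_deriv_add_mul_deriv_nonneg_of_isLocalMin_exp_mul
      ((hspace.eventually (by simp)).mono fun y hy => hy.differentiableAt (by norm_num))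
      ((hspace.derivWithin (m := 1) (by norm_num)).differentiableAt (by norm_num)) hspace_min
  have htime_deriv : HasDerivAt (fun τ => exp (a * x) * v x τ + ε * τ)
      (exp (a * x) * deriv (fun τ => v x τ) t + ε) t :=
    (htime.hasDerivAt.const_mul _).fun_add
      ((hasDerivAt_id' t).const_mul ε |>.congr_deriv (mul_one ε))
  have := htime_deriv.nonpos_of_isLocalMinOn_Iic hmin.isLocalMinOn_snd
  nlinarith [exp_pos (a * x)]

theorem not_differentiableAt_of_isLocalMinOn_barrier {a ε t : ℝ} {v : ℝ → ℝ → ℝ} (ha : 0 < a)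
    (hflux : deriv (fun ξ => v ξ t) 0 + a * v 0 t = -a)
    (hmin : IsLocalMinOn (fun ξ => barrier a ε v (ξ, t)) (Ici 0) 0) :
    ¬ DifferentiableAt ℝ (fun ξ => v ξ t) 0 := by
  intro hd
  have := add_mul_nonneg_of_isLocalMinOn_Ici_exp_mul hd.hasDerivAt
    (hmin.mono fun ξ hξ => by simpa [barrier] using hξ)
  nlinarith

theorem barrier_nonneg {s : ℝ → ℝ} {T T' a ε : ℝ} {v : ℝ → ℝ → ℝ} (ha : 0 < a) (hε : 0 < ε)
    (hT' : T' < T) (hεT' : ε * T' < 1) (hs : ContinuousOn s (Icc 0 T))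
    (hspos : ∀ t ∈ Icc (0 : ℝ) T, 0 < s t)
    (hvC2 : ContDiffOn ℝ 2 (fun p : ℝ × ℝ => v p.1 p.2) (stefanDomain s T))
    (hv : ContinuousOn (fun p : ℝ × ℝ => v p.1 p.2) (closure (stefanDomain s T)))
    (hpde : ∀ p ∈ stefanDomain s T, deriv (fun τ => v p.1 τ) p.2
      = deriv (deriv (fun ξ => v ξ p.2)) p.1 + a * deriv (fun ξ => v ξ p.2) p.1)
    (hflux : ∀ t ∈ Ioc (0 : ℝ) T, deriv (fun ξ => v ξ t) 0 + a * v 0 t = -a)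
    (hdir : ∀ t ∈ Ioc (0 : ℝ) T, v (s t) t = 0)
    (hinit : ∀ x ∈ Icc 0 (s 0), 0 ≤ v x 0) :
    ∀ q ∈ closure (stefanDomain s T), q.2 ≤ T' → 0 ≤ barrier a ε v q := by
  intro q hqK hqT'
  by_contra! hq
  -- Where `v (·, t)` is not differentiable at `0`, `deriv` is `0` and the flux condition forces
  -- `v 0 t = -1`; `c` is chosen above the resulting barrier value `-1 + ε t`.
  obtain ⟨c, hc_lo, hc_neg⟩ := exists_between (max_lt hq (by linarith : -1 + ε * T' < 0))
  obtain ⟨⟨x, t⟩, hpK, htq, hpc, hmin, hfirst⟩ :=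
    (isCompact_closure_stefanDomain hs).exists_first_hit_isMinOn (continuousOn_barrier hv)
      continuous_snd hqK ((le_max_left _ _).trans hc_lo.le)
  dsimp only at htq hmin hfirst
  obtain ⟨hx, hxs, ht, htT⟩ : 0 ≤ x ∧ x ≤ s t ∧ 0 ≤ t ∧ t ≤ T :=
    closure_stefanDomain_subset hs hpK
  have hnonneg : 0 ≤ v x t → 0 ≤ barrier a ε v (x, t) := fun h =>
    add_nonneg (mul_nonneg (exp_pos _).le h) (mul_nonneg hε.le ht)
  rcases ht.eq_or_lt with rfl | ht
  · linarith [hnonneg (hinit x ⟨hx, hxs⟩)]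
  rcases hxs.eq_or_lt with rfl | hxs
  · linarith [hnonneg (hdir t ⟨ht, htT⟩).ge]
  have htT' : t < T := by linarith
  rcases hx.eq_or_lt with rfl | hx
  · have hedge_min : IsLocalMinOn (fun ξ => barrier a ε v (ξ, t)) (Ici 0) 0 := by
      filter_upwards [Ico_mem_nhdsGE hxs] with ξ hξ
      rcases hξ.1.eq_or_lt with rfl | hξ0
      · exact le_rfl
      · exact hmin ⟨subset_closure ⟨hξ0, hξ.2, ht, htT⟩, (le_rfl : t ≤ t)⟩
    have hflux_t := hflux t ⟨ht, htT⟩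
    rw [deriv_zero_of_not_differentiableAt
      (not_differentiableAt_of_isLocalMinOn_barrier ha hflux_t hedge_min), zero_add] at hflux_t
    have hv0 : v 0 t = -1 := by nlinarith
    have hedge : ∀ τ ∈ Ioc 0 t, ((0 : ℝ), τ) ∈ closure (stefanDomain s T) := fun τ hτ =>
      mem_closure_stefanDomain_of_fst_eq_zero hτ.1 (hτ.2.trans htT)
        (hspos τ ⟨hτ.1.le, hτ.2.trans htT⟩)
    have hedge_cont : ContinuousWithinAt (fun τ => barrier a ε v (0, τ)) (Ioo 0 t) t :=
      ((continuousOn_barrier hv).comp (Continuous.prodMk_right 0).continuousOn hedge t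
        ⟨ht, le_rfl⟩).mono Ioo_subset_Ioc_self
    have hc_le : c ≤ barrier a ε v (0, t) :=
      ContinuousWithinAt.closure_le (f := fun _ => c) (g := fun τ => barrier a ε v (0, τ))
        (by rw [closure_Ioo ht.ne]; exact ⟨ht.le, le_rfl⟩) continuousWithinAt_const hedge_cont
        fun τ hτ => (hfirst _ (hedge τ (Ioo_subset_Ioc_self hτ)) hτ.2).le
    simp only [barrier, hv0, mul_zero, exp_zero] at hc_le
    nlinarith [le_max_right (barrier a ε v q) (-1 + ε * T')]
  · have hmem : (x, t) ∈ stefanDomain s T ∩ {p | p.2 < T} := ⟨⟨hx, hxs, ht, htT⟩, htT'⟩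
    have hnhds : stefanDomain s T ∩ {p | p.2 < T} ∈ 𝓝 (x, t) :=
      (isOpen_stefanDomain_inter hs).mem_nhds hmem
    exact not_isLocalMinOn_barrier hε (hvC2.contDiffAt (mem_of_superset hnhds inter_subset_left))
      (hpde _ hmem.1) (hmin.isLocalMinOn_of_mem_nhds
        (mem_of_superset hnhds (inter_subset_left.trans subset_closure)))

theorem nonneg_of_forall_barrier_nonneg {a δ : ℝ} {v : ℝ → ℝ → ℝ} {p : ℝ × ℝ} (hδ : 0 < δ)
    (h : ∀ ε ∈ Ioo 0 δ, 0 ≤ barrier a ε v p) : 0 ≤ v p.1 p.2 := by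
  have hlim : Tendsto (fun ε => barrier a ε v p) (𝓝[>] 0)
      (𝓝 (exp (a * p.1) * v p.1 p.2)) := by
    have hcont : Continuous fun ε => barrier a ε v p := by unfold barrier; fun_prop
    simpa [barrier] using (hcont.tendsto 0).mono_left nhdsWithin_le_nhds
  exact (mul_nonneg_iff_of_pos_left (exp_pos _)).1
    (ge_of_tendsto hlim (eventually_of_mem (Ioo_mem_nhdsGT hδ) h))

/-- Nonnegativity of classical solutions of ∂ₜv = ∂ₓₓv + a∂ₓv on the
non-cylindrical domain D_T = {(x,t) : 0 < x < s(t), 0 < t ≤ T}, with flux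
condition (∂ₓv + av)(0,t) = −a and v(s(t),t) = 0, assuming v(·,0) ≥ 0. -/
theorem stmt2
    (T a : ℝ) (hT : 0 < T) (ha : 0 < a)
    (s : ℝ → ℝ) (hsC1 : ContDiffOn ℝ 1 s (Set.Icc 0 T))
    (hspos : ∀ t ∈ Set.Icc (0:ℝ) T, 0 < s t)
    (DT : Set (ℝ × ℝ))
    (hDT : DT = {p : ℝ × ℝ | 0 < p.1 ∧ p.1 < s p.2 ∧ 0 < p.2 ∧ p.2 ≤ T})
    (v : ℝ → ℝ → ℝ)
    (hvC2 : ContDiffOn ℝ 2 (fun p : ℝ × ℝ => v p.1 p.2) DT)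
    (hvC1 : ContDiffOn ℝ 1 (fun p : ℝ × ℝ => v p.1 p.2) (closure DT))
    (hpde : ∀ p ∈ DT, deriv (fun τ => v p.1 τ) p.2
      = deriv (deriv (fun ξ => v ξ p.2)) p.1 + a * deriv (fun ξ => v ξ p.2) p.1)
    (hflux : ∀ t ∈ Set.Ioc (0:ℝ) T, deriv (fun ξ => v ξ t) 0 + a * v 0 t = -a)
    (hdir : ∀ t ∈ Set.Ioc (0:ℝ) T, v (s t) t = 0)
    (hinit : ∀ x ∈ Set.Icc 0 (s 0), 0 ≤ v x 0) :
    ∀ p ∈ closure DT, 0 ≤ v p.1 p.2 := by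
  obtain rfl : DT = stefanDomain s T := hDT
  have hs := hsC1.continuousOn
  have hv := hvC1.continuousOn
  have hbefore : ∀ p ∈ stefanDomain s T ∩ {p | p.2 < T}, 0 ≤ v p.1 p.2 := fun p hp =>
    nonneg_of_forall_barrier_nonneg (one_div_pos.2 hT) fun ε hε => by
      have hεT : ε * p.2 < 1 := calc
        ε * p.2 < ε * T := mul_lt_mul_of_pos_left hp.2 hε.1
        _ < 1 := (lt_div_iff₀ hT).1 hε.2
      exact barrier_nonneg ha hε.1 hp.2 hεT hs hspos hvC2 hv hpde hflux hdir hinit p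
        (subset_closure hp.1) le_rfl
  intro p hp
  exact ContinuousWithinAt.closure_le
    (closure_minimal (stefanDomain_subset_closure_inter hs) isClosed_closure hp)
    continuousWithinAt_const ((hv p hp).mono (inter_subset_left.trans subset_closure)) hbefore
end

section
/- There exists a finite constant C such that for every square-summable sequence of real numbers (b_k)_{k≥1}: ∑_{k=1}^∞ ∑_{j≥1, j−k odd} |b_k|·|b_j| / |k² − j²| ≤ C·∑_{k=1}^∞ b_k². -/
/-!
By AM–GM, `|b_k| |b_j| ≤ (b_k² + b_j²) / 2`, and for `k ≠ j` we have `|k² − j²| ≥ (k − j)²`.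
The kernel `1 / (j − k)²` then depends only on `j − k`, so summing over either index first
bounds the double sum by `(∑_{n ∈ ℤ} 1 / n²) · ∑_k b_k²`.
-/

open ENNReal NNReal

protected theorem ENNReal.two_mul_le_add_sq (a b : ℝ≥0∞) : 2 * a * b ≤ a ^ 2 + b ^ 2 := by
  rcases eq_or_ne a ∞ with rfl | ha
  · simp
  rcases eq_or_ne b ∞ with rfl | hb
  · simp
  lift a to ℝ≥0 using ha
  lift b to ℝ≥0 using hb
  exact_mod_cast two_mul_le_add_sq a b

theorem ENNReal.tsum_tsum_mul_mul_le_tsum_mul_tsum_sq (x : ℕ → ℝ≥0∞) (w : ℤ → ℝ≥0∞) :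
    ∑' (k : ℕ) (j : ℕ), x k * x j * w (j - k) ≤ (∑' n, w n) * ∑' k, x k ^ 2 := by
  set W := ∑' n, w n
  have row (k : ℕ) : ∑' j : ℕ, w (j - k) ≤ W :=
    tsum_comp_le_tsum_of_injective (fun j₁ j₂ h => by simpa using h) w
  have col (j : ℕ) : ∑' k : ℕ, w (j - k) ≤ W :=
    tsum_comp_le_tsum_of_injective (fun k₁ k₂ h => by simpa using h) w
  rw [← ENNReal.mul_le_mul_iff_right two_ne_zero ofNat_ne_top]
  calc 2 * ∑' (k : ℕ) (j : ℕ), x k * x j * w (j - k)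
      = ∑' (k : ℕ) (j : ℕ), 2 * x k * x j * w (j - k) := by
        simp only [← ENNReal.tsum_mul_left, mul_assoc]
    _ ≤ ∑' (k : ℕ) (j : ℕ), (x k ^ 2 * w (j - k) + x j ^ 2 * w (j - k)) := by
        gcongr with k j
        rw [← add_mul]
        exact mul_le_mul_left (ENNReal.two_mul_le_add_sq _ _) _
    _ = ∑' k, x k ^ 2 * ∑' j : ℕ, w (j - k) + ∑' j, x j ^ 2 * ∑' k : ℕ, w (j - k) := by
        simp only [ENNReal.tsum_add, ENNReal.tsum_mul_left]
        rw [ENNReal.tsum_comm (f := fun (k j : ℕ) => x j ^ 2 * w ((j : ℤ) - k))]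
        simp only [ENNReal.tsum_mul_left]
    _ ≤ ∑' k, x k ^ 2 * W + ∑' j, x j ^ 2 * W := by
        gcongr with k j
        exacts [row k, col j]
    _ = 2 * (W * ∑' k, x k ^ 2) := by
        rw [ENNReal.tsum_mul_right, two_mul, mul_comm]

theorem sq_sub_le_abs_sq_sub_sq {x y : ℝ} (hx : 0 ≤ x) (hy : 0 ≤ y) :
    (x - y) ^ 2 ≤ |x ^ 2 - y ^ 2| := by
  rw [sq_sub_sq, abs_mul, sq, ← abs_mul_abs_self, abs_of_nonneg (add_nonneg hx hy)]
  gcongr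
  exact abs_le.mpr ⟨by linarith, by linarith⟩

theorem abs_mul_abs_div_abs_succ_sq_sub_succ_sq_le {k j : ℕ} (hkj : k ≠ j) (a b : ℝ) :
    |a| * |b| / |((k : ℝ) + 1) ^ 2 - ((j : ℝ) + 1) ^ 2|
      ≤ |a| * |b| * (1 / (((j : ℤ) - k : ℤ) : ℝ) ^ 2) := by
  have hpos : 0 < ((j : ℝ) - k) ^ 2 := by
    have : (j : ℝ) ≠ k := by exact_mod_cast hkj.symm
    positivity
  have hsq : ((j : ℝ) - k) ^ 2 ≤ |((k : ℝ) + 1) ^ 2 - ((j : ℝ) + 1) ^ 2| := by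
    calc ((j : ℝ) - k) ^ 2 = ((k + 1) - (j + 1)) ^ 2 := by ring
      _ ≤ _ := sq_sub_le_abs_sq_sub_sq (by positivity) (by positivity)
  push_cast
  rw [← div_eq_mul_one_div]
  exact div_le_div_of_nonneg_left (by positivity) hpos hsq

/-- There is a universal constant C such that for every square-summable real
sequence (b_k)_{k≥1}, the double sum ∑_{k≥1} ∑_{j≥1, j−k odd} |b_k||b_j|/|k²−j²|
is at most C ∑_{k≥1} b_k². (Stated in ℝ≥0∞ so that the double sum is always
well defined; indices are shifted so that k+1, j+1 range over {1,2,…}.) -/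
theorem stmt19 :
    ∃ C : ℝ, ∀ b : ℕ → ℝ, Summable (fun k => (b (k + 1)) ^ 2) →
      ∑' (k : ℕ), ∑' (j : ℕ),
          (if Odd ((j : ℤ) - (k : ℤ)) then
            ENNReal.ofReal (|b (k + 1)| * |b (j + 1)|
              / |((k : ℝ) + 1) ^ 2 - ((j : ℝ) + 1) ^ 2|)
          else 0)
        ≤ ENNReal.ofReal (C * ∑' (k : ℕ), (b (k + 1)) ^ 2) := by
  have hw : Summable fun n : ℤ => 1 / (n : ℝ) ^ 2 := Real.summable_one_div_int_pow.mpr one_lt_two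
  refine ⟨∑' n : ℤ, 1 / (n : ℝ) ^ 2, fun b hb => ?_⟩
  set x : ℕ → ℝ≥0∞ := fun k => ENNReal.ofReal |b (k + 1)|
  set w : ℤ → ℝ≥0∞ := fun n => ENNReal.ofReal (1 / (n : ℝ) ^ 2)
  have term_le (k j : ℕ) :
      (if Odd ((j : ℤ) - (k : ℤ)) then
        ENNReal.ofReal (|b (k + 1)| * |b (j + 1)| / |((k : ℝ) + 1) ^ 2 - ((j : ℝ) + 1) ^ 2|)
      else 0) ≤ x k * x j * w (j - k) := by
    split_ifs with h
    · have hkj : k ≠ j := by rintro rfl; simp at h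
      rw [← ofReal_mul (abs_nonneg _), ← ofReal_mul (by positivity)]
      exact ofReal_le_ofReal (abs_mul_abs_div_abs_succ_sq_sub_succ_sq_le hkj _ _)
    · exact bot_le
  calc _ ≤ ∑' (k : ℕ) (j : ℕ), x k * x j * w (j - k) :=
        ENNReal.tsum_le_tsum fun k => ENNReal.tsum_le_tsum (term_le k)
    _ ≤ (∑' n, w n) * ∑' k, x k ^ 2 := ENNReal.tsum_tsum_mul_mul_le_tsum_mul_tsum_sq x w
    _ = _ := by
      rw [ENNReal.ofReal_mul (tsum_nonneg fun n => by positivity),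
        ENNReal.ofReal_tsum_of_nonneg (fun n => by positivity) hw,
        ENNReal.ofReal_tsum_of_nonneg (fun k => sq_nonneg _) hb]
      simp only [x, w, ← ofReal_pow (abs_nonneg _), sq_abs]
end
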